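/- Let N ≥ 3 be an integer, U_{L,N} the group of units of O_L congruent to 1 modulo N·O_L, and l ≥ 0 an integer. Let V be the complex vector space with basis (e_n) indexed by the tuples n = (n₁,…,n_g) ∈ ℕ^g with n₁ + ⋯ + n_g = l, on which U_{L,N} acts linearly by ε · e_n = ( Π_{k=1}^{g} σ_k(ε)^{-n_k} ) e_n. Then the space of coinvariants V / span{ v − ε·v : v ∈ V, ε ∈ U_{L,N} } has dimension 1 if g divides l (spanned by the class of e_{(l/g,…,l/g)}) and dimension 0 otherwise. (This is the arithmetic-group cohomology computation underlying Proposition 3.1 on the degeneration space H^{2g-1} i_∞^* j_* (Sym^l ℋ)(g).) -/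

import Mathlib

/-!
A unit `ε ≡ 1 (mod N)` acts on `e_n` by the character `ε ↦ ∏ₖ σₖ(ε)^{-nₖ}`, so the coinvariants
are spanned by the classes of the `e_n` whose character is trivial on `U_{L,N}`. For constant `n`
the character is a power of the norm, which is `1` on `U_{L,N}`: it is `≡ 1 (mod N)` and `±1`,
and `N ≥ 3`. Conversely, every unit has a power in `U_{L,N}`, so a trivial character gives
`∑ₖ nₖ log |σₖ(u)| = 0` for every unit `u`; testing this against a unit that is small at every
place but the one where `n` is minimal (Dirichlet) forces `n` to be constant. Among the tuples
with `∑ nₖ = l` there is exactly one constant one if `g ∣ l`, and none otherwise.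
-/

open NumberField

/-- The complex vector space with basis indexed by tuples `n ∈ ℕ^g` with `n₁ + ⋯ + n_g = l`. -/
abbrev tupleSpace (g l : ℕ) : Type := {n : Fin g → ℕ // ∑ i, n i = l} →₀ ℂ

theorem Algebra.norm_sub_one_mem_span_of_sub_one_mem_span {R S : Type*} [CommRing R]
    [CommRing S] [Algebra R S] [Module.Free R S] [Module.Finite R S] (r : R) {x : S}
    (hx : x - 1 ∈ Ideal.span {algebraMap R S r}) :
    Algebra.norm R x - 1 ∈ Ideal.span {r} := by
  obtain ⟨a, ha⟩ := Ideal.mem_span_singleton'.mp hx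
  have hx' : x = 1 + r • a := by rw [Algebra.smul_def]; linear_combination ha.symm
  let b := Module.Free.chooseBasis R S
  have hr : Ideal.Quotient.mk (Ideal.span {r}) r = 0 :=
    Ideal.Quotient.eq_zero_iff_mem.mpr (Ideal.mem_span_singleton_self r)
  rw [← Ideal.Quotient.eq, map_one, Algebra.norm_eq_matrix_det b, RingHom.map_det, hx',
    map_add, map_one, map_smul, map_add, map_one, RingHom.mapMatrix_apply,
    Matrix.map_smul' _ _ _ (map_mul _), hr, zero_smul, add_zero, Matrix.det_one]

theorem Ideal.exists_pow_sub_one_mem {S : Type*} [CommRing S] (I : Ideal S) [Finite (S ⧸ I)]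
    (u : Sˣ) : ∃ p : ℕ, 0 < p ∧ ((u ^ p : Sˣ) : S) - 1 ∈ I := by
  refine ⟨Nat.card (S ⧸ I)ˣ, Nat.card_pos, ?_⟩
  rw [← Ideal.Quotient.eq, Units.val_pow_eq_pow_val, map_pow, map_one]
  exact congr_arg Units.val (pow_card_eq_one' (x := Units.map (Ideal.Quotient.mk I).toMonoidHom u))

namespace Finsupp

variable {ι K E : Type*} [Field K]

theorem span_sub_apply_eq_supported (act : E → (ι →₀ K) →ₗ[K] ι →₀ K) (χ : E → ι → K)
    (hact : ∀ ε i, act ε (single i 1) = single i (χ ε i)) (P : E → Prop) :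
    Submodule.span K {w | ∃ v ε, P ε ∧ w = v - act ε v} =
      supported K K {i | ∃ ε, P ε ∧ χ ε i ≠ 1} := by
  have hsingle : ∀ ε i c, single i c - act ε (single i c) = (c * (1 - χ ε i)) • single i 1 := by
    intro ε i c
    rw [← smul_single_one i c, map_smul, hact]
    ext j
    by_cases h : i = j <;> simp [h, mul_sub]
  apply le_antisymm
  · rw [Submodule.span_le]
    rintro _ ⟨v, ε, hε, rfl⟩
    rw [SetLike.mem_coe]
    induction v using Finsupp.induction_linear with
    | zero => simp
    | add v w hv hw => simpa only [map_add, add_sub_add_comm] using add_mem hv hw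
    | single i c =>
      rw [hsingle]
      by_cases hχ : χ ε i = 1
      · simp [hχ]
      · exact Submodule.smul_mem _ _ (single_mem_supported K 1 ⟨ε, hε, hχ⟩)
  · rw [supported_eq_span_single, Submodule.span_le]
    rintro _ ⟨i, ⟨ε, hε, hχ⟩, rfl⟩
    have hmem := Submodule.smul_mem _ (1 - χ ε i)⁻¹
      (Submodule.subset_span (s := {w | ∃ v ε, P ε ∧ w = v - act ε v}) ⟨single i 1, ε, hε, rfl⟩)
    rwa [hsingle, one_mul, smul_smul, inv_mul_cancel₀ (sub_ne_zero.mpr (Ne.symm hχ)),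
      one_smul] at hmem

theorem supported_compl_singleton_eq_ker_lapply {R M : Type*} [Semiring R] [AddCommMonoid M]
    [Module R M] (i : ι) : supported M R ({i}ᶜ : Set ι) = LinearMap.ker (lapply i) := by
  ext v
  simp [mem_supported']

theorem finrank_quotient_supported_compl_singleton (i : ι) :
    Module.finrank K ((ι →₀ K) ⧸ supported K K ({i}ᶜ : Set ι)) = 1 := by
  rw [supported_compl_singleton_eq_ker_lapply, LinearEquiv.finrank_eq
    ((lapply i).quotKerEquivOfSurjective fun c => ⟨single i c, by simp⟩), Module.finrank_self]

theorem exists_eq_smul_mk_single (i : ι) (x : (ι →₀ K) ⧸ supported K K ({i}ᶜ : Set ι)) :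
    ∃ c : K, x = c • Submodule.Quotient.mk (single i 1) := by
  obtain ⟨v, rfl⟩ := Submodule.Quotient.mk_surjective _ x
  refine ⟨v i, ?_⟩
  rw [← Submodule.Quotient.mk_smul, Submodule.Quotient.eq, supported_compl_singleton_eq_ker_lapply]
  simp

end Finsupp

namespace NumberField.InfinitePlace

variable {K : Type*} [Field K]

theorem mk_ofRealHom_comp_apply (φ : K →+* ℝ) (x : K) :
    mk (Complex.ofRealHom.comp φ) x = |φ x| := by
  rw [apply, RingHom.comp_apply, Complex.ofRealHom_eq_coe, Complex.norm_real, Real.norm_eq_abs]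

theorem conjugate_ofRealHom_comp (φ : K →+* ℝ) :
    ComplexEmbedding.conjugate (Complex.ofRealHom.comp φ) = Complex.ofRealHom.comp φ := by
  ext; simp

theorem mult_mk_ofRealHom_comp (φ : K →+* ℝ) : mult (mk (Complex.ofRealHom.comp φ)) = 1 :=
  mult_isReal ⟨_, isReal_mk_iff.mpr (ComplexEmbedding.isReal_iff.mpr (conjugate_ofRealHom_comp φ))⟩

theorem mk_ofRealHom_comp_injective :
    Function.Injective fun φ : K →+* ℝ => mk (Complex.ofRealHom.comp φ) := by
  intro φ ψ h
  have h' : Complex.ofRealHom.comp φ = Complex.ofRealHom.comp ψ := by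
    simpa [conjugate_ofRealHom_comp] using mk_eq_iff.mp h
  ext x
  exact Complex.ofReal_injective (RingHom.congr_fun h' x)

end NumberField.InfinitePlace

namespace NumberField

variable {K : Type*} [Field K] [NumberField K]

theorem norm_eq_one_of_sub_one_mem_span {N : ℕ} (hN : 3 ≤ N) {ε : (𝓞 K)ˣ}
    (hε : (ε : 𝓞 K) - 1 ∈ Ideal.span {(N : 𝓞 K)}) : Algebra.norm ℤ (ε : 𝓞 K) = 1 := by
  have hcong := Algebra.norm_sub_one_mem_span_of_sub_one_mem_span (N : ℤ) (by simpa using hε)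
  rcases Int.isUnit_iff.mp (ε.isUnit.map (Algebra.norm ℤ)) with h | h
  · exact h
  · rw [h, Ideal.mem_span_singleton] at hcong
    have := Int.le_of_dvd (by norm_num) (dvd_neg.mpr hcong)
    omega

theorem Units.exists_eq_mul_mult_of_forall_sum_mul_log_eq_zero {f : InfinitePlace K → ℝ}
    (hf : ∀ u : (𝓞 K)ˣ, ∑ w, f w * Real.log (w u) = 0) : ∃ c, ∀ w, f w = c * w.mult := by
  obtain ⟨w₁, hw₁⟩ := Finite.exists_min fun w : InfinitePlace K => f w / w.mult
  set c := f w₁ / w₁.mult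
  have hmult : ∀ w : InfinitePlace K, (0 : ℝ) < w.mult := fun w => by
    exact_mod_cast InfinitePlace.mult_pos
  have hw₁c : f w₁ - c * w₁.mult = 0 := by rw [div_mul_cancel₀ _ (hmult w₁).ne', sub_self]
  have hnonneg : ∀ w, 0 ≤ f w - c * w.mult := fun w => by
    have := (le_div_iff₀ (hmult w)).mp (hw₁ w)
    linarith
  obtain ⟨u, hu⟩ := Units.dirichletUnitTheorem.exists_unit K w₁
  have hsum : ∑ w, (f w - c * w.mult) * Real.log (w u) = 0 := by
    simp only [sub_mul, Finset.sum_sub_distrib, mul_assoc, ← Finset.mul_sum, hf u,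
      Units.sum_mult_mul_log, mul_zero, sub_zero]
  have hterm := (Finset.sum_eq_zero_iff_of_nonpos fun w _ => ?_).mp hsum
  · refine ⟨c, fun w => ?_⟩
    by_cases hw : w = w₁
    · subst hw; linarith
    · rcases mul_eq_zero.mp (hterm w (Finset.mem_univ w)) with h | h
      · linarith
      · exact absurd h (hu w hw).ne
  · by_cases hw : w = w₁
    · rw [hw, hw₁c, zero_mul]
    · exact mul_nonpos_of_nonneg_of_nonpos (hnonneg w) (hu w hw).le

section TotallyReal

variable (hcard : Fintype.card (K →+* ℝ) = Module.finrank ℚ K)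
include hcard

theorem ofRealHom_comp_bijective :
    Function.Bijective fun φ : K →+* ℝ => Complex.ofRealHom.comp φ := by
  refine (Fintype.bijective_iff_injective_and_card _).mpr
    ⟨fun φ ψ h => ?_, by rw [hcard, Embeddings.card]⟩
  ext x
  exact Complex.ofReal_injective (RingHom.congr_fun h x)

theorem prod_realEmbeddings_eq_norm (x : K) : ∏ φ : K →+* ℝ, φ x = Algebra.norm ℚ x := by
  apply Complex.ofReal_injective
  have := Algebra.norm_eq_prod_embeddings ℚ ℂ x
  rw [← Fintype.prod_equiv (RingHom.equivRatAlgHom K ℂ) (fun ψ => ψ x) _ (fun _ => rfl)] at this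
  rw [Complex.ofReal_ratCast, ← eq_ratCast (algebraMap ℚ ℂ), this, Complex.ofReal_prod]
  exact Fintype.prod_bijective _ (ofRealHom_comp_bijective hcard) _ _ fun _ => rfl

theorem InfinitePlace.mk_ofRealHom_comp_bijective :
    Function.Bijective fun φ : K →+* ℝ => InfinitePlace.mk (Complex.ofRealHom.comp φ) := by
  refine ⟨InfinitePlace.mk_ofRealHom_comp_injective, fun w => ?_⟩
  obtain ⟨φ, hφ⟩ := (ofRealHom_comp_bijective hcard).surjective w.embedding
  exact ⟨φ, by simp only [hφ, InfinitePlace.mk_embedding]⟩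

variable {ι : Type*} [Fintype ι] {σ : ι → K →+* ℝ} (hσ : Function.Bijective σ)
include hσ

theorem eq_of_forall_sum_mul_log_abs_eq_zero {f : ι → ℝ}
    (hf : ∀ u : (𝓞 K)ˣ, ∑ i, f i * Real.log |σ i u| = 0) (i j : ι) : f i = f j := by
  let e := Equiv.ofBijective _ ((InfinitePlace.mk_ofRealHom_comp_bijective hcard).comp hσ)
  obtain ⟨c, hc⟩ := Units.exists_eq_mul_mult_of_forall_sum_mul_log_eq_zero (f := f ∘ e.symm)
    fun u => by
      rw [← hf u, ← e.sum_comp]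
      refine Finset.sum_congr rfl fun i _ => ?_
      rw [Function.comp_apply, e.symm_apply_apply, Equiv.ofBijective_apply, Function.comp_apply,
        InfinitePlace.mk_ofRealHom_comp_apply]
  have hconst : ∀ i, f i = c := fun i => by
    have := hc (e i)
    rwa [Function.comp_apply, e.symm_apply_apply, Equiv.ofBijective_apply, Function.comp_apply,
      InfinitePlace.mult_mk_ofRealHom_comp, Nat.cast_one, mul_one] at this
  rw [hconst i, hconst j]

theorem forall_prod_zpow_eq_one_iff {N : ℕ} (hN : 3 ≤ N) (n : ι → ℤ) :
    (∀ ε : (𝓞 K)ˣ, (ε : 𝓞 K) - 1 ∈ Ideal.span {(N : 𝓞 K)} → ∏ i, σ i ε ^ n i = 1) ↔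
      ∀ i j, n i = n j := by
  have hlog : ∀ x : K, x ≠ 0 → Real.log |∏ i, σ i x ^ n i| = ∑ i, n i * Real.log |σ i x| := by
    intro x hx
    rw [Finset.abs_prod,
      Real.log_prod fun i _ => abs_ne_zero.mpr (zpow_ne_zero _ ((map_ne_zero _).mpr hx))]
    simp only [abs_zpow, Real.log_zpow]
  constructor
  · intro htriv
    refine fun i j => Int.cast_injective (α := ℝ) <|
      eq_of_forall_sum_mul_log_abs_eq_zero hcard hσ (f := fun i => (n i : ℝ)) (fun u => ?_) i j
    have : Finite (𝓞 K ⧸ Ideal.span {(N : 𝓞 K)}) := Ideal.finiteQuotientOfFreeOfNeBot _ (by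
      rw [ne_eq, Ideal.span_singleton_eq_bot]; exact_mod_cast (by omega : N ≠ 0))
    obtain ⟨p, hp, hpU⟩ := Ideal.exists_pow_sub_one_mem (Ideal.span {(N : 𝓞 K)}) u
    have htriv' := htriv (u ^ p) hpU
    push_cast at htriv'
    have h := hlog _ (pow_ne_zero p (by simp : ((u : 𝓞 K) : K) ≠ 0))
    rw [htriv', abs_one, Real.log_one] at h
    simp only [map_pow, abs_pow, Real.log_pow, mul_left_comm _ (p : ℝ), ← Finset.mul_sum] at h
    exact (mul_eq_zero.mp h.symm).resolve_left (by positivity)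
  · intro hconst ε hε
    rcases isEmpty_or_nonempty ι with hι | ⟨⟨i₀⟩⟩
    · simp
    · have hnorm : ∏ i, σ i ε = 1 := by
        rw [Fintype.prod_bijective σ hσ (fun i => σ i ε) (fun φ => φ ε) fun _ => rfl,
          prod_realEmbeddings_eq_norm hcard, ← Algebra.coe_norm_int,
          norm_eq_one_of_sub_one_mem_span hN hε, Int.cast_one, Rat.cast_one]
      rw [Finset.prod_congr rfl fun i _ => by rw [hconst i i₀], Finset.prod_zpow, hnorm, one_zpow]

end TotallyReal

end NumberField

section Compositions

variable {g l : ℕ}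

theorem sum_eq_mul_of_forall_eq {n : Fin g → ℕ} (hn : ∀ i j, n i = n j) (i : Fin g) :
    ∑ j, n j = g * n i := by
  simpa using Finset.sum_eq_card_nsmul (s := Finset.univ) fun j _ => hn j i

theorem setOf_not_forall_eq_eq_compl_singleton (hg : 0 < g) (hdvd : g ∣ l) :
    {n : {n : Fin g → ℕ // ∑ i, n i = l} | ¬ ∀ i j, n.1 i = n.1 j} =
      {⟨fun _ => l / g, by simp [Nat.mul_div_cancel' hdvd]⟩}ᶜ := by
  ext ⟨n, hsum⟩
  simp only [Set.mem_ofPred_eq, Set.mem_compl_iff, Set.mem_singleton_iff, not_iff_not,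
    Subtype.mk.injEq]
  refine ⟨fun hn => funext fun i => ?_, fun hn => hn ▸ fun _ _ => rfl⟩
  rw [← hsum, sum_eq_mul_of_forall_eq hn i, Nat.mul_div_cancel_left _ hg]

theorem setOf_not_forall_eq_eq_univ (hg : 0 < g) (hdvd : ¬ g ∣ l) :
    {n : {n : Fin g → ℕ // ∑ i, n i = l} | ¬ ∀ i j, n.1 i = n.1 j} = Set.univ :=
  Set.eq_univ_of_forall fun n hn => hdvd ⟨_, n.2 ▸ sum_eq_mul_of_forall_eq hn ⟨0, hg⟩⟩

end Compositions

/-- with `U_{L,N}` acting on the space with basis `(e_n)_{Σn_k = l}` by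
`ε · e_n = (Π_k σ_k(ε)^{-n_k}) e_n`, the coinvariants have dimension `1` if `g ∣ l`
(spanned by the class of `e_{(l/g,…,l/g)}`) and `0` otherwise. -/
theorem unit_coinvariants_dimension
    (L : Type*) [Field L] [NumberField L] (g : ℕ)
    (σ : Fin g → (L →+* ℝ)) (hσ : Function.Bijective σ)
    (hdeg : Module.finrank ℚ L = g)
    (N : ℕ) (hN : 3 ≤ N) (l : ℕ)
    (act : (𝓞 L)ˣ → tupleSpace g l →ₗ[ℂ] tupleSpace g l)
    (hact : ∀ (ε : (𝓞 L)ˣ) (n : {n : Fin g → ℕ // ∑ i, n i = l}),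
      act ε (Finsupp.single n 1) =
        Finsupp.single n (∏ k : Fin g, ((σ k ((ε : 𝓞 L) : L) : ℂ)) ^ (-(n.1 k : ℤ))))
    (W : Submodule ℂ (tupleSpace g l))
    (hW : W = Submodule.span ℂ
      {w : tupleSpace g l | ∃ (v : tupleSpace g l) (ε : (𝓞 L)ˣ),
        ((ε : 𝓞 L) - 1) ∈ Ideal.span {(N : 𝓞 L)} ∧ w = v - act ε v}) :
    Module.finrank ℂ (tupleSpace g l ⧸ W) = (if g ∣ l then 1 else 0) ∧
    (g ∣ l → ∀ n0 : {n : Fin g → ℕ // ∑ i, n i = l}, (∀ i, n0.1 i = l / g) →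
      ∀ x : tupleSpace g l ⧸ W, ∃ c : ℂ,
        x = c • Submodule.Quotient.mk (p := W) (Finsupp.single n0 1)) := by
  have hcard : Fintype.card (L →+* ℝ) = Module.finrank ℚ L := by
    rw [hdeg, ← Fintype.card_of_bijective hσ, Fintype.card_fin]
  have hg : 0 < g := hdeg ▸ Module.finrank_pos
  have htriv : ∀ n : {n : Fin g → ℕ // ∑ i, n i = l},
      (∀ ε : (𝓞 L)ˣ, (ε : 𝓞 L) - 1 ∈ Ideal.span {(N : 𝓞 L)} →
        ∏ k, ((σ k ((ε : 𝓞 L) : L) : ℝ) : ℂ) ^ (-(n.1 k : ℤ)) = 1) ↔ ∀ i j, n.1 i = n.1 j := by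
    intro n
    have := forall_prod_zpow_eq_one_iff hcard hσ hN fun k => -(n.1 k : ℤ)
    simp only [neg_inj, Nat.cast_inj] at this
    rw [← this]
    exact_mod_cast Iff.rfl
  have hWsupp : W = Finsupp.supported ℂ ℂ {n | ¬ ∀ i j, n.1 i = n.1 j} := by
    rw [hW, Finsupp.span_sub_apply_eq_supported act _ hact]
    congr 1
    ext n
    rw [Set.mem_ofPred_eq, Set.mem_ofPred_eq, ← htriv n, not_forall]
    simp only [Classical.not_imp, ne_eq]
  subst hWsupp
  by_cases hdvd : g ∣ l
  · rw [setOf_not_forall_eq_eq_compl_singleton hg hdvd, if_pos hdvd]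
    refine ⟨Finsupp.finrank_quotient_supported_compl_singleton _, fun _ n hn => ?_⟩
    obtain rfl : n = ⟨fun _ => l / g, by simp [Nat.mul_div_cancel' hdvd]⟩ :=
      Subtype.ext (funext hn)
    exact Finsupp.exists_eq_smul_mk_single _
  · rw [setOf_not_forall_eq_eq_univ hg hdvd, Finsupp.supported_univ, if_neg hdvd]
    exact ⟨Module.finrank_zero_of_subsingleton, fun h => absurd h hdvd⟩
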